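/- arXiv:2605.30228 — 2 statements merged into one kernel-verified Lean document; each statement's English description precedes it below -/
import Mathlib

section
/- For every m ≥ 0, the map T_m(θ, λ) = (ϑ(θ)(λ + m), λ² − m²) is a bijection from (-π/2, π/2) × (m, +∞) onto (0, +∞) × (0, +∞), with inverse T_m⁻¹(a, μ) = (ϑ⁻¹(a/(√(μ + m²) + m)), √(μ + m²)). -/
open Real Set

/-- ϑ(θ) = (1 - sin θ)/cos θ -/
noncomputable def vth (θ : ℝ) : ℝ := (1 - Real.sin θ) / Real.cos θ

/-!
Half-angle substitution turns `ϑ` into `θ ↦ tan ((π/2 - θ)/2)`, which maps `(-π/2, π/2)` onto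
`(0, ∞)`; hence any inverse of `ϑ` on these sets maps `(0, ∞)` back into `(-π/2, π/2)`.
For `λ > m ≥ 0` the second coordinate `μ = λ² - m²` recovers `λ = √(μ + m²)`, and then
`λ + m > 0` recovers `ϑ θ` from the first coordinate.
-/

lemma vth_eq_tan (θ : ℝ) : vth θ = tan ((π / 2 - θ) / 2) := by
  set t := (π / 2 - θ) / 2
  have hθ : θ = π / 2 - 2 * t := by ring
  rw [vth, hθ, sin_pi_div_two_sub, cos_pi_div_two_sub, cos_two_mul, cos_sq', sin_two_mul,
    tan_eq_sin_div_cos]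
  rcases eq_or_ne (sin t) 0 with hs | hs
  · simp [hs]
  · rw [show 1 - (2 * (1 - sin t ^ 2) - 1) = 2 * sin t * sin t by ring,
      mul_div_mul_left _ _ (mul_ne_zero two_ne_zero hs)]

lemma vth_mapsTo : MapsTo vth (Ioo (-(π / 2)) (π / 2)) (Ioi 0) := fun θ hθ => by
  rw [vth_eq_tan]
  exact tan_pos_of_pos_of_lt_pi_div_two (by linarith [hθ.2]) (by linarith [hθ.1])

lemma vth_surjOn : SurjOn vth (Ioo (-(π / 2)) (π / 2)) (Ioi 0) := fun a (ha : 0 < a) => by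
  have hpos : 0 < arctan a := by simpa using arctan_strictMono ha
  refine ⟨π / 2 - 2 * arctan a, ⟨by linarith [arctan_lt_pi_div_two a], by linarith⟩, ?_⟩
  rw [vth_eq_tan, show (π / 2 - (π / 2 - 2 * arctan a)) / 2 = arctan a by ring, tan_arctan]

lemma lt_sqrt_add_sq {m μ : ℝ} (hm : 0 ≤ m) (hμ : 0 < μ) : m < √(μ + m ^ 2) :=
  (lt_sqrt hm).2 (by linarith)

noncomputable def vthMap (m : ℝ) (p : ℝ × ℝ) : ℝ × ℝ := (vth p.1 * (p.2 + m), p.2 ^ 2 - m ^ 2)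

noncomputable def vthMapInv (m : ℝ) (vthInv : ℝ → ℝ) (q : ℝ × ℝ) : ℝ × ℝ :=
  (vthInv (q.1 / (√(q.2 + m ^ 2) + m)), √(q.2 + m ^ 2))

section

variable {m : ℝ} {vthInv : ℝ → ℝ}

lemma vthMap_mapsTo (hm : 0 ≤ m) :
    MapsTo (vthMap m) (Ioo (-(π / 2)) (π / 2) ×ˢ Ioi m) (Ioi 0 ×ˢ Ioi 0) :=
  fun ⟨θ, l⟩ ⟨hθ, (hl : m < l)⟩ =>
    ⟨mul_pos (vth_mapsTo hθ) (show 0 < l + m by linarith), show 0 < l ^ 2 - m ^ 2 by nlinarith⟩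

lemma vthMapInv_mapsTo (hm : 0 ≤ m) (hInv : LeftInvOn vthInv vth (Ioo (-(π / 2)) (π / 2))) :
    MapsTo (vthMapInv m vthInv) (Ioi 0 ×ˢ Ioi 0) (Ioo (-(π / 2)) (π / 2) ×ˢ Ioi m) :=
  fun ⟨a, μ⟩ ⟨(ha : 0 < a), (hμ : 0 < μ)⟩ =>
    have hl := lt_sqrt_add_sq hm hμ
    ⟨hInv.mapsTo vth_surjOn (div_pos ha (by linarith)), hl⟩

lemma vthMap_invOn (hm : 0 ≤ m)
    (hInv : InvOn vthInv vth (Ioo (-(π / 2)) (π / 2)) (Ioi 0)) :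
    InvOn (vthMapInv m vthInv) (vthMap m) (Ioo (-(π / 2)) (π / 2) ×ˢ Ioi m) (Ioi 0 ×ˢ Ioi 0) := by
  constructor
  · rintro ⟨θ, l⟩ ⟨hθ, hl : m < l⟩
    simp only [vthMap, vthMapInv, sub_add_cancel, sqrt_sq (show 0 ≤ l by linarith)]
    rw [mul_div_cancel_right₀ _ (by linarith), hInv.1 hθ]
  · rintro ⟨a, μ⟩ ⟨ha : 0 < a, hμ : 0 < μ⟩
    have hl := lt_sqrt_add_sq hm hμ
    simp only [vthMap, vthMapInv]
    rw [hInv.2 (div_pos ha (by linarith)), div_mul_cancel₀ _ (by linarith), sq_sqrt (by positivity),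
      add_sub_cancel_right]

end

theorem stmt_3 (m : ℝ) (hm : 0 ≤ m)
    (vthInv : ℝ → ℝ)
    (hInv : Set.InvOn vthInv vth (Set.Ioo (-(Real.pi / 2)) (Real.pi / 2)) (Set.Ioi 0)) :
    Set.BijOn (fun p : ℝ × ℝ => (vth p.1 * (p.2 + m), p.2 ^ 2 - m ^ 2))
      ((Set.Ioo (-(Real.pi / 2)) (Real.pi / 2)) ×ˢ (Set.Ioi m))
      ((Set.Ioi (0 : ℝ)) ×ˢ (Set.Ioi (0 : ℝ))) ∧
    Set.InvOn
      (fun q : ℝ × ℝ =>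
        (vthInv (q.1 / (Real.sqrt (q.2 + m ^ 2) + m)), Real.sqrt (q.2 + m ^ 2)))
      (fun p : ℝ × ℝ => (vth p.1 * (p.2 + m), p.2 ^ 2 - m ^ 2))
      ((Set.Ioo (-(Real.pi / 2)) (Real.pi / 2)) ×ˢ (Set.Ioi m))
      ((Set.Ioi (0 : ℝ)) ×ˢ (Set.Ioi (0 : ℝ))) :=
  ⟨(vthMap_invOn hm hInv).bijOn (vthMap_mapsTo hm) (vthMapInv_mapsTo hm hInv.1),
    vthMap_invOn hm hInv⟩
end

section
/- Let μ : (0, ∞) → ℝ be continuous, strictly concave, with μ(a) → 0 as a → 0⁺, μ strictly increasing with range (0, Λ) for some Λ > 0, and positive slope at the origin S := lim_{a→0⁺} μ(a)/a > 0. Let m ≥ 0, v > 0, and p(a) = (a/v − m)² − m². Then there exists a unique a⋆ > 0 with μ(a⋆) = p(a⋆). -/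
/-!
Put `f = μ - p`. Since `μ` is strictly concave and `p` is a convex quadratic, `f` is strictly
concave. Near `0⁺` we have `f a / a → S + 2m/v > 0`, so `f > 0` there, while `μ < Λ` and
`p → ∞` make `f` negative further out; the intermediate value theorem gives a zero. A second
zero is impossible: strict concavity would force `f > 0` between a point of positivity near `0`
and the larger zero, hence at the smaller one.
-/

open Real Set Filter Topology

lemma convexOn_sq_div_sub_sq (v m : ℝ) : ConvexOn ℝ univ fun a : ℝ => (a / v - m) ^ 2 - m ^ 2 := by
  have h := ((even_two.convexOn_pow (𝕜 := ℝ)).comp_affineMap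
    (AffineMap.lineMap (-m) (v⁻¹ - m))).add_const (-m ^ 2)
  rw [preimage_univ] at h
  refine h.congr fun a _ => ?_
  simp only [Pi.add_apply, Function.comp_apply, AffineMap.lineMap_apply_ring']
  ring

lemma tendsto_sq_div_sub_sq_div_self {v : ℝ} (hv : v ≠ 0) (m : ℝ) :
    Tendsto (fun a : ℝ => ((a / v - m) ^ 2 - m ^ 2) / a) (𝓝[>] 0) (𝓝 (-(2 * m / v))) := by
  have hlin : Tendsto (fun a : ℝ => a / v ^ 2 - 2 * m / v) (𝓝 0) (𝓝 (0 / v ^ 2 - 2 * m / v)) :=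
    (tendsto_id.div_const _).sub tendsto_const_nhds
  rw [zero_div, zero_sub] at hlin
  refine (hlin.mono_left nhdsWithin_le_nhds).congr' ?_
  filter_upwards [self_mem_nhdsWithin] with a (ha : 0 < a)
  field_simp
  ring

lemma eventually_pos_of_tendsto_div_self {f : ℝ → ℝ} {L : ℝ} (hL : 0 < L)
    (hf : Tendsto (fun a => f a / a) (𝓝[>] 0) (𝓝 L)) : ∀ᶠ a in 𝓝[>] 0, 0 < f a := by
  filter_upwards [hf.eventually (eventually_gt_nhds hL), self_mem_nhdsWithin] with a h ha
  exact (div_pos_iff_of_pos_right ha).1 h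

lemma StrictConcaveOn.subsingleton_zeros_of_eventually_pos {f : ℝ → ℝ}
    (hf : StrictConcaveOn ℝ (Ioi 0) f) (hpos : ∀ᶠ a in 𝓝[>] 0, 0 < f a) :
    {a ∈ Ioi (0 : ℝ) | f a = 0}.Subsingleton := by
  suffices h : ∀ x y, 0 < x → x < y → f x = 0 → f y ≠ 0 by
    rintro x ⟨hx, hfx⟩ y ⟨hy, hfy⟩
    rcases lt_trichotomy x y with hxy | hxy | hxy
    exacts [absurd hfy (h x y hx hxy hfx), hxy, absurd hfx (h y x hy hxy hfy)]
  intro x y hx hxy hfx hfy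
  obtain ⟨z, hfz, hz⟩ := (hpos.and (Ioo_mem_nhdsGT hx)).exists
  have hmin := hf.lt_on_openSegment hz.1 (hx.trans hxy) (hz.2.trans hxy).ne
    (by rw [openSegment_eq_Ioo (hz.2.trans hxy)]; exact ⟨hz.2, hxy⟩)
  rw [hfx, hfy, min_eq_right hfz.le] at hmin
  exact hmin.false

theorem stmt_4_general (μ : ℝ → ℝ) (Λ S m v : ℝ)
    (hΛ : 0 < Λ) (hm : 0 ≤ m) (hv : 0 < v)
    (hcont : ContinuousOn μ (Set.Ioi 0))
    (hconc : StrictConcaveOn ℝ (Set.Ioi 0) μ)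
    (hbij : Set.BijOn μ (Set.Ioi 0) (Set.Ioo 0 Λ))
    (hslope : Filter.Tendsto (fun a => μ a / a) (nhdsWithin 0 (Set.Ioi 0)) (nhds S))
    (hS : 0 < S) :
    ∃! a : ℝ, a ∈ Set.Ioi (0 : ℝ) ∧ μ a = (a / v - m) ^ 2 - m ^ 2 := by
  set f : ℝ → ℝ := fun a => μ a - ((a / v - m) ^ 2 - m ^ 2) with hf
  have hzero : ∀ a, μ a = (a / v - m) ^ 2 - m ^ 2 ↔ f a = 0 := fun a => sub_eq_zero.symm
  simp only [hzero]
  have hfconc : StrictConcaveOn ℝ (Ioi 0) f :=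
    hconc.sub_convexOn ((convexOn_sq_div_sub_sq v m).subset (subset_univ _) (convex_Ioi 0))
  have hnear : ∀ᶠ a in 𝓝[>] 0, 0 < f a := by
    refine eventually_pos_of_tendsto_div_self (L := S + 2 * m / v) (by positivity) ?_
    simpa [hf, sub_div, sub_neg_eq_add] using hslope.sub (tendsto_sq_div_sub_sq_div_self hv.ne' m)
  obtain ⟨a₀, ha₀, ha₀_pos⟩ := (hnear.and self_mem_nhdsWithin).exists
  -- at `b = v (2m + Λ + 1)` one has `p b = (2m + Λ + 1)(Λ + 1) > Λ > μ b`
  set b := v * (2 * m + Λ + 1)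
  have hb : 0 < b := by positivity
  have hfb : f b < 0 := by
    have hμb : μ b < Λ := (hbij.mapsTo hb).2
    have hpb : (b / v - m) ^ 2 - m ^ 2 = (2 * m + Λ + 1) * (Λ + 1) := by
      field_simp [b]; ring
    simp only [hf, hpb]
    nlinarith
  have hfcont : ContinuousOn f (Ioi 0) := hcont.sub (by fun_prop)
  obtain ⟨c, hc, hfc⟩ :=
    isPreconnected_Ioi.intermediate_value hb ha₀_pos hfcont ⟨hfb.le, ha₀.le⟩
  exact ⟨c, ⟨hc, hfc⟩, fun y hy => hfconc.subsingleton_zeros_of_eventually_pos hnear hy ⟨hc, hfc⟩⟩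

theorem stmt_4 (μ : ℝ → ℝ) (Λ S m v : ℝ)
    (hΛ : 0 < Λ) (hm : 0 ≤ m) (hv : 0 < v)
    (hcont : ContinuousOn μ (Set.Ioi 0))
    (hmono : StrictMonoOn μ (Set.Ioi 0))
    (hconc : StrictConcaveOn ℝ (Set.Ioi 0) μ)
    (hbij : Set.BijOn μ (Set.Ioi 0) (Set.Ioo 0 Λ))
    (h0 : Filter.Tendsto μ (nhdsWithin 0 (Set.Ioi 0)) (nhds 0))
    (hslope : Filter.Tendsto (fun a => μ a / a) (nhdsWithin 0 (Set.Ioi 0)) (nhds S))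
    (hS : 0 < S) :
    ∃! a : ℝ, a ∈ Set.Ioi (0 : ℝ) ∧ μ a = (a / v - m) ^ 2 - m ^ 2 :=
  stmt_4_general μ Λ S m v hΛ hm hv hcont hconc hbij hslope hS
end
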